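/- Let σ be a diagonal Pauli matrix of Pauli weight ≥ 3 on n qubits and H_0 = (π/N)σ with N = 2^n. Then for every J ∈ 𝒥, F_q(H_0 − J) ≥ q·|λ^{H_0−J}_{j*}|, where j* is the index of σ; combined with the lattice bound this gives F_q(H_0 − J) ≥ qπ/N. -/

import Mathlib

/-!
Since `((-1)^{i·j*})² = 1`, the `j*`-coefficient of
`(c/N) σ_{j*} − 2c J` is `(c/N)(1 − 2m)` with `m = ∑ᵢ Jᵢ (-1)^{i·j*} ∈ ℤ`; an odd integer has
modulus at least `1`, so this coefficient has modulus at least `|c|/N`. As `j*` has Pauli weight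
`≥ 3`, its square enters `F_q²` with weight `q²`, whence `F_q ≥ q |λ_{j*}|`.
-/

open Finset

/-- Bitwise inner product (number of positions where both bits are 1). -/
def bip {n : ℕ} (i j : Fin n → Bool) : ℕ :=
  (Finset.univ.filter fun k => i k && j k).card

/-- Pauli weight: number of Z factors. -/
def pw {n : ℕ} (j : Fin n → Bool) : ℕ :=
  (Finset.univ.filter fun k => j k = true).card

/-- Pauli expansion coefficient of the diagonal matrix with diagonal `h`. -/
noncomputable def lam {n : ℕ} (h : (Fin n → Bool) → ℝ) (j : Fin n → Bool) : ℝ :=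
  (1 / (2 ^ n : ℝ)) * ∑ i, h i * (-1 : ℝ) ^ bip i j

/-- The 2×2 Pauli Z matrix. -/
def Zmat : Matrix Bool Bool ℝ :=
  Matrix.diagonal fun a => if a then -1 else 1

/-- Tensor product of 2×2 matrices, indexed by bit strings. -/
def tensorProd {n : ℕ} (A : Fin n → Matrix Bool Bool ℝ) :
    Matrix (Fin n → Bool) (Fin n → Bool) ℝ :=
  fun i i' => ∏ k, A k (i k) (i' k)

/-- The diagonal Pauli matrix σ_j : tensor product of I's and Z's. -/
def sigma {n : ℕ} (j : Fin n → Bool) : Matrix (Fin n → Bool) (Fin n → Bool) ℝ :=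
  tensorProd fun k => if j k then Zmat else 1

/-- The weighted Pauli metric F_q on diagonal Hermitians given by their diagonal. -/
noncomputable def Fq {n : ℕ} (q : ℝ) (h : (Fin n → Bool) → ℝ) : ℝ :=
  Real.sqrt ((∑ j ∈ Finset.univ.filter fun j => pw j ≤ 2, (lam h j) ^ 2)
    + q ^ 2 * ∑ j ∈ Finset.univ.filter fun j => 3 ≤ pw j, (lam h j) ^ 2)

section PauliCoefficients

variable {n : ℕ}

lemma neg_one_pow_bip_mul_self (i j : Fin n → Bool) :
    (-1 : ℝ) ^ bip i j * (-1 : ℝ) ^ bip i j = 1 := by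
  rw [← mul_pow, neg_one_mul, neg_neg, one_pow]

lemma lam_sub (f g : (Fin n → Bool) → ℝ) (j : Fin n → Bool) :
    lam (fun i => f i - g i) j = lam f j - lam g j := by
  simp only [lam, sub_mul, Finset.sum_sub_distrib, mul_sub]

lemma lam_const_mul_sign_self (a : ℝ) (j : Fin n → Bool) :
    lam (fun i => a * (-1 : ℝ) ^ bip i j) j = a := by
  simp only [lam, mul_assoc, neg_one_pow_bip_mul_self, mul_one, Finset.sum_const,
    Finset.card_univ, Fintype.card_fun, Fintype.card_bool, Fintype.card_fin, nsmul_eq_mul]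
  push_cast
  field_simp

lemma lam_const_mul (c : ℝ) (h : (Fin n → Bool) → ℝ) (j : Fin n → Bool) :
    lam (fun i => c * h i) j = c * lam h j := by
  simp only [lam, mul_assoc, ← Finset.mul_sum]
  ring

lemma exists_lam_intCast_eq (v : (Fin n → Bool) → ℤ) (j : Fin n → Bool) :
    ∃ m : ℤ, lam (fun i => (v i : ℝ)) j = m / 2 ^ n :=
  ⟨∑ i, v i * (-1) ^ bip i j, by simp [lam, div_eq_inv_mul]⟩

lemma mul_abs_lam_le_Fq {q : ℝ} (hq : 0 ≤ q) (h : (Fin n → Bool) → ℝ)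
    {j : Fin n → Bool} (hj : 3 ≤ pw j) : q * |lam h j| ≤ Fq q h := by
  have hsingle : lam h j ^ 2 ≤ ∑ k ∈ univ.filter fun k => 3 ≤ pw k, lam h k ^ 2 :=
    Finset.single_le_sum (f := fun k => lam h k ^ 2) (fun _ _ => sq_nonneg _) (by simpa using hj)
  have hlow : 0 ≤ ∑ k ∈ univ.filter fun k => pw k ≤ 2, lam h k ^ 2 :=
    Finset.sum_nonneg fun _ _ => sq_nonneg _
  calc q * |lam h j| = √(q ^ 2 * lam h j ^ 2) := by
        rw [← mul_pow, Real.sqrt_sq_eq_abs, abs_mul, abs_of_nonneg hq]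
    _ ≤ Fq q h := Real.sqrt_le_sqrt (by nlinarith [sq_nonneg q])

end PauliCoefficients

lemma one_le_abs_one_sub_two_mul (m : ℤ) : 1 ≤ |1 - 2 * (m : ℝ)| := by
  have : (1 : ℤ) ≤ |1 - 2 * m| := Int.one_le_abs (by omega)
  exact_mod_cast this

lemma abs_div_two_pow_le_abs_lam {n : ℕ} (c : ℝ) (j : Fin n → Bool) (v : (Fin n → Bool) → ℤ) :
    |c| / 2 ^ n ≤ |lam (fun i => c / 2 ^ n * (-1 : ℝ) ^ bip i j - 2 * c * (v i : ℝ)) j| := by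
  obtain ⟨m, hm⟩ := exists_lam_intCast_eq v j
  have hlam : lam (fun i => c / 2 ^ n * (-1 : ℝ) ^ bip i j - 2 * c * (v i : ℝ)) j
      = c / 2 ^ n * (1 - 2 * m) := by
    rw [lam_sub, lam_const_mul_sign_self, lam_const_mul, hm]
    field_simp
  rw [hlam, abs_mul, abs_div, abs_of_pos (by positivity : (0 : ℝ) < 2 ^ n)]
  exact le_mul_of_one_le_right (by positivity) (one_le_abs_one_sub_two_mul m)

/-- for σ = σ_{j*} of Pauli weight ≥ 3 and H₀ = (π/N)σ, for every
J in the lattice 𝒥, F_q(H₀ − J) ≥ q·|λ^{H₀−J}_{j*}|, and combined with the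
lattice bound F_q(H₀ − J) ≥ qπ/N. -/
theorem stmt8 {n : ℕ} (q : ℝ) (hq : 0 ≤ q) (jstar : Fin n → Bool)
    (hw : 3 ≤ pw jstar) (jv : (Fin n → Bool) → ℤ) :
    q * |lam (fun i => (π / (2 ^ n : ℝ)) * (-1 : ℝ) ^ bip i jstar
          - 2 * π * (jv i : ℝ)) jstar| ≤
      Fq q (fun i => (π / (2 ^ n : ℝ)) * (-1 : ℝ) ^ bip i jstar
          - 2 * π * (jv i : ℝ)) ∧
    q * π / (2 ^ n : ℝ) ≤
      Fq q (fun i => (π / (2 ^ n : ℝ)) * (-1 : ℝ) ^ bip i jstar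
          - 2 * π * (jv i : ℝ)) := by
  have hF := mul_abs_lam_le_Fq hq
    (fun i => π / 2 ^ n * (-1 : ℝ) ^ bip i jstar - 2 * π * (jv i : ℝ)) hw
  refine ⟨hF, ?_⟩
  -- `π` is an auto-bound real variable here, not `Real.pi`; the bound holds for any real.
  calc q * π / 2 ^ n ≤ q * (|π| / 2 ^ n) := by
        rw [mul_div_assoc]; gcongr; exact le_abs_self π
    _ ≤ _ := mul_le_mul_of_nonneg_left (abs_div_two_pow_le_abs_lam π jstar jv) hq
    _ ≤ _ := hF
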